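/- arXiv:1605.07102 — 7 statements merged into one kernel-verified Lean document; each statement's English description precedes it below -/
import Mathlib

section
/- If $z$ is a nonzero complex number with $|z| \neq \rho^\rho (1-\rho)^{1-\rho}$ where $\rho = N/L$, then every root of the polynomial $q_z(w) = w^N(w+1)^{L-N} - z^L$ is simple. -/
/-! The identity `w (w + 1) q_z'(w) = (L w + N) (q_z(w) + z^L)` shows that a root of `q_z` at
which `q_z'` also vanishes must be `w = -ρ` (as `z ≠ 0`). There
`|z|^L = ρ^N (1 - ρ)^(L - N) = (ρ^ρ (1 - ρ)^(1 - ρ))^L`, and taking `L`-th roots contradicts the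
hypothesis on `|z|`. -/

theorem natCast_mul_pow_pred_mul_self {R : Type*} [CommSemiring R] (n : ℕ) (x : R) :
    (n : R) * x ^ (n - 1) * x = n * x ^ n := by
  cases n with
  | zero => simp
  | succ n => rw [Nat.add_sub_cancel, mul_assoc, ← pow_succ]

theorem mul_mul_add_one_mul_deriv_pow_mul_add_one_pow {𝕜 : Type*} [NontriviallyNormedField 𝕜]
    (m n : ℕ) (x : 𝕜) :
    x * (x + 1) * deriv (fun x => x ^ m * (x + 1) ^ n) x =
      ((m + n) * x + m) * (x ^ m * (x + 1) ^ n) := by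
  have hderiv : HasDerivAt (fun x => x ^ m * (x + 1) ^ n)
      (m * x ^ (m - 1) * (x + 1) ^ n + x ^ m * (n * (x + 1) ^ (n - 1))) x := by
    simpa using (hasDerivAt_pow m x).fun_mul (((hasDerivAt_id x).add_const 1).fun_pow n)
  rw [hderiv.deriv]
  linear_combination (x + 1) ^ (n + 1) * natCast_mul_pow_pred_mul_self m x +
    x ^ (m + 1) * natCast_mul_pow_pred_mul_self n (x + 1)

theorem eq_neg_div_of_deriv_pow_mul_add_one_pow_eq_zero {N L : ℕ} (hNL : N ≤ L) (hL : L ≠ 0)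
    {w : ℂ} (hw : w ^ N * (w + 1) ^ (L - N) ≠ 0)
    (hcrit : deriv (fun w => w ^ N * (w + 1) ^ (L - N)) w = 0) :
    w = -((N : ℂ) / L) := by
  have hlin := mul_mul_add_one_mul_deriv_pow_mul_add_one_pow N (L - N) w
  rw [hcrit, mul_zero, Nat.cast_sub hNL, add_sub_cancel, eq_comm] at hlin
  have hLC : (L : ℂ) ≠ 0 := by exact_mod_cast hL
  field_simp
  linear_combination (mul_eq_zero.mp hlin).resolve_right hw

theorem one_sub_natCast_div_natCast_nonneg {N L : ℕ} (hNL : N ≤ L) :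
    0 ≤ 1 - (N : ℝ) / L :=
  sub_nonneg.2 (div_le_one_of_le₀ (by exact_mod_cast hNL) (Nat.cast_nonneg L))

theorem norm_pow_mul_add_one_pow_neg_div {N L : ℕ} (hNL : N ≤ L) :
    ‖(-((N : ℂ) / L)) ^ N * (-((N : ℂ) / L) + 1) ^ (L - N)‖ =
      ((N : ℝ) / L) ^ N * (1 - (N : ℝ) / L) ^ (L - N) := by
  have hshift : -((N : ℂ) / L) + 1 = ((1 - (N : ℝ) / L : ℝ) : ℂ) := by push_cast; ring
  rw [hshift, norm_mul, norm_pow, norm_pow, norm_neg, norm_div, Complex.norm_natCast,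
    Complex.norm_natCast, Complex.norm_real,
    Real.norm_of_nonneg (one_sub_natCast_div_natCast_nonneg hNL)]

theorem rpow_div_mul_one_sub_rpow_div_pow {N L : ℕ} (hNL : N ≤ L) (hL : L ≠ 0) :
    (((N : ℝ) / L) ^ ((N : ℝ) / L) * (1 - (N : ℝ) / L) ^ (1 - (N : ℝ) / L)) ^ L =
      ((N : ℝ) / L) ^ N * (1 - (N : ℝ) / L) ^ (L - N) := by
  have hLR : (L : ℝ) ≠ 0 := by exact_mod_cast hL
  have hexp : (1 - (N : ℝ) / L) * L = ((L - N : ℕ) : ℝ) := by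
    rw [Nat.cast_sub hNL]; field_simp
  rw [mul_pow, ← Real.rpow_natCast, ← Real.rpow_mul (by positivity), div_mul_cancel₀ _ hLR,
    Real.rpow_natCast, ← Real.rpow_natCast (_ ^ _),
    ← Real.rpow_mul (one_sub_natCast_div_natCast_nonneg hNL), hexp, Real.rpow_natCast]

theorem qz_roots_simple_general (L N : ℕ) (hNL : N < L) (z : ℂ) (hz : z ≠ 0)
    (habs : ‖z‖ ≠
      ((N : ℝ) / L) ^ ((N : ℝ) / L) * (1 - (N : ℝ) / L) ^ (1 - (N : ℝ) / L))
    (w : ℂ) (hw : w ^ N * (w + 1) ^ (L - N) - z ^ L = 0) :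
    deriv (fun w : ℂ => w ^ N * (w + 1) ^ (L - N) - z ^ L) w ≠ 0 := by
  have hL : L ≠ 0 := (N.zero_le.trans_lt hNL).ne'
  have hroot : w ^ N * (w + 1) ^ (L - N) = z ^ L := sub_eq_zero.mp hw
  intro hcrit
  rw [deriv_sub_const] at hcrit
  have hw_eq := eq_neg_div_of_deriv_pow_mul_add_one_pow_eq_zero hNL.le hL
    (hroot ▸ pow_ne_zero L hz) hcrit
  have hρ1 := one_sub_natCast_div_natCast_nonneg hNL.le
  refine habs ((pow_left_inj₀ (norm_nonneg z) (by positivity) hL).mp ?_)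
  rw [← norm_pow, ← hroot, hw_eq, norm_pow_mul_add_one_pow_neg_div hNL.le,
    rpow_div_mul_one_sub_rpow_div_pow hNL.le hL]

/-- If `z ≠ 0` and `|z| ≠ ρ^ρ (1-ρ)^(1-ρ)` with `ρ = N/L`, every root of
`q_z(w) = w^N (w+1)^(L-N) - z^L` is simple. -/
theorem qz_roots_simple (L N : ℕ) (hN : 0 < N) (hNL : N < L) (z : ℂ) (hz : z ≠ 0)
    (habs : ‖z‖ ≠
      ((N : ℝ) / L) ^ ((N : ℝ) / L) * (1 - (N : ℝ) / L) ^ (1 - (N : ℝ) / L))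
    (w : ℂ) (hw : w ^ N * (w + 1) ^ (L - N) - z ^ L = 0) :
    deriv (fun w : ℂ => w ^ N * (w + 1) ^ (L - N) - z ^ L) w ≠ 0 :=
  qz_roots_simple_general L N hNL z hz habs w hw
end

section
/- For every complex number $s$ with $\Re(s) > 0$ and every real $c$ with $0 < c < \Re(s)$, one has $\frac{1}{\sqrt{2\pi}} e^{s^2/2} \int_{-\infty}^{-s} e^{-x^2/2}\, dx = \frac{1}{2\pi i}\int_{\Re(\eta) = c} \frac{e^{\eta^2/2}}{s - \eta}\, d\eta$, where the integral on the left is along a path from $-\infty$ to $-s$ (e.g. $(-\infty, -\Re(s)] \cup [-\Re(s), -s]$) and the integral on the right is along the vertical line $\Re(\eta) = c$ oriented from $c - i\infty$ to $c + i\infty$. -/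
/-!
Both sides equal `e^{s²/2} g(s) / √(2π)` with `g(z) = ∫_0^∞ e^{-(t+z)²/2} dt`. The function `g`
is entire with `g' = -e^{-z²/2}`, so the ray `(-∞, -Re s]` contributes `g(Re s)` and the
segment `[-Re s, -s]` contributes `g(s) - g(Re s)`. On the vertical line
`Re(s - η) = Re s - c > 0`, so `1/(s - η) = ∫_0^∞ e^{-(s-η)t} dt`; after Fubini the inner
integral is the Gaussian `∫ e^{η²/2 + tη} dy = √(2π) e^{-t²/2}`, and `e^{-t²/2 - ts}` is
`e^{s²/2} e^{-(t+s)²/2}`.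
-/

open MeasureTheory Set Complex Filter

lemma norm_cexp_neg_sq_add_div_two (t : ℝ) (z : ℂ) :
    ‖cexp (-((t : ℂ) + z) ^ 2 / 2)‖ = Real.exp (-(t + z.re) ^ 2 / 2 + z.im ^ 2 / 2) := by
  rw [norm_exp]
  congr 1
  simp only [sq, div_ofNat_re, neg_re, mul_re, add_re, ofReal_re, add_im, ofReal_im, zero_add,
    neg_sub]
  ring

lemma integrable_cexp_neg_sq_add_div_two (z : ℂ) :
    Integrable fun t : ℝ => cexp (-((t : ℂ) + z) ^ 2 / 2) := by
  convert integrable_cexp_quadratic (b := 1 / 2) (by norm_num) (-z) (-z ^ 2 / 2) using 3 with t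
  ring

lemma tendsto_cexp_neg_sq_add_div_two (z : ℂ) :
    Tendsto (fun t : ℝ => cexp (-((t : ℂ) + z) ^ 2 / 2)) atTop (nhds 0) := by
  rw [tendsto_zero_iff_norm_tendsto_zero]
  simp_rw [norm_cexp_neg_sq_add_div_two]
  refine Real.tendsto_exp_atBot.comp (tendsto_atBot_add_const_right _ _ ?_)
  have h := ((tendsto_pow_atTop two_ne_zero).comp (tendsto_atTop_add_const_right atTop z.re
    tendsto_id)).const_mul_atTop_of_neg (by norm_num : (-1 / 2 : ℝ) < 0)
  convert h using 2 with t
  simp only [Function.comp_apply, id]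
  ring

lemma hasDerivAt_cexp_neg_sq_add_div_two (a z : ℂ) :
    HasDerivAt (fun w : ℂ => cexp (-(a + w) ^ 2 / 2)) (-(a + z) * cexp (-(a + z) ^ 2 / 2)) z := by
  have h : HasDerivAt (fun w : ℂ => -(a + w) ^ 2 / 2) (-(a + z)) z := by
    refine ((((hasDerivAt_id z).const_add a).pow 2).neg.div_const 2).congr_deriv ?_
    simp only [id, Nat.cast_ofNat, Nat.add_one_sub_one, pow_one, mul_one]
    ring
  simpa only [mul_comm] using h.cexp

lemma norm_neg_mul_cexp_neg_sq_add_le {x : ℂ} {M : ℝ} (hx : ‖x‖ ≤ M) (t : ℝ) :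
    ‖-((t : ℂ) + x) * cexp (-((t : ℂ) + x) ^ 2 / 2)‖
      ≤ Real.exp (M ^ 2 / 2) * ((|t| + M) * Real.exp (-(1 / 4) * t ^ 2)) := by
  rw [norm_mul, norm_neg, norm_cexp_neg_sq_add_div_two, mul_left_comm, ← Real.exp_add]
  have hlin : ‖(t : ℂ) + x‖ ≤ |t| + M := by
    simpa using (norm_add_le (t : ℂ) x).trans (add_le_add_right hx _)
  have hsq : x.re ^ 2 + x.im ^ 2 ≤ M ^ 2 := by
    have := Complex.sq_norm x
    rw [Complex.normSq_apply] at this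
    nlinarith [norm_nonneg x]
  have hexp : -(t + x.re) ^ 2 / 2 + x.im ^ 2 / 2 ≤ M ^ 2 / 2 + -(1 / 4) * t ^ 2 := by
    nlinarith [sq_nonneg (t / 2 + x.re)]
  exact mul_le_mul hlin (Real.exp_le_exp.mpr hexp) (Real.exp_pos _).le
    ((abs_nonneg t).trans (by linarith [norm_nonneg x]))

lemma integrable_abs_add_const_mul_exp_neg_mul_sq {b : ℝ} (hb : 0 < b) (M : ℝ) :
    Integrable fun t : ℝ => (|t| + M) * Real.exp (-b * t ^ 2) := by
  refine ((integrable_mul_exp_neg_mul_sq hb).norm.add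
    ((integrable_exp_neg_mul_sq hb).const_mul M)).congr (ae_of_all _ fun t => ?_)
  simp only [Pi.add_apply, norm_mul, Real.norm_eq_abs, abs_of_pos (Real.exp_pos _)]
  ring

/-- `gaussTail z = ∫_z^{z+∞} e^{-w²/2} dw` along the horizontal ray from `z`, an entire
extension of `√(π/2) erfc(z/√2)`. -/
noncomputable def gaussTail (z : ℂ) : ℂ := ∫ t in Ioi (0 : ℝ), cexp (-((t : ℂ) + z) ^ 2 / 2)

lemma integrable_neg_mul_cexp_neg_sq_add_div_two (z : ℂ) :
    Integrable fun t : ℝ => -((t : ℂ) + z) * cexp (-((t : ℂ) + z) ^ 2 / 2) :=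
  ((integrable_abs_add_const_mul_exp_neg_mul_sq (by norm_num) ‖z‖).const_mul _).mono'
    (by fun_prop) (ae_of_all _ (norm_neg_mul_cexp_neg_sq_add_le le_rfl))

lemma integral_Ioi_neg_mul_cexp_neg_sq_add_div_two (z : ℂ) :
    ∫ t in Ioi (0 : ℝ), -((t : ℂ) + z) * cexp (-((t : ℂ) + z) ^ 2 / 2) = -cexp (-z ^ 2 / 2) := by
  have hderiv (t : ℝ) : HasDerivAt (fun t : ℝ => cexp (-((t : ℂ) + z) ^ 2 / 2))
      (-((t : ℂ) + z) * cexp (-((t : ℂ) + z) ^ 2 / 2)) t := by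
    simpa only [add_comm] using (hasDerivAt_cexp_neg_sq_add_div_two z t).comp_ofReal
  have h := integral_Ioi_of_hasDerivAt_of_tendsto
    (hderiv 0).continuousAt.continuousWithinAt (fun t _ => hderiv t)
    (integrable_neg_mul_cexp_neg_sq_add_div_two z).integrableOn
    (tendsto_cexp_neg_sq_add_div_two z)
  simpa using h

theorem hasDerivAt_gaussTail (z : ℂ) : HasDerivAt gaussTail (-cexp (-z ^ 2 / 2)) z := by
  have hball {x : ℂ} (hx : x ∈ Metric.ball z 1) : ‖x‖ ≤ ‖z‖ + 1 := by
    rw [Metric.mem_ball, dist_eq_norm] at hx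
    linarith [norm_le_norm_add_norm_sub' x z]
  have h := hasDerivAt_integral_of_dominated_loc_of_deriv_le (μ := volume.restrict (Ioi 0))
    (F := fun (x : ℂ) (t : ℝ) => cexp (-((t : ℂ) + x) ^ 2 / 2))
    (F' := fun (x : ℂ) (t : ℝ) => -((t : ℂ) + x) * cexp (-((t : ℂ) + x) ^ 2 / 2))
    (Metric.ball_mem_nhds z one_pos) (.of_forall fun x => by fun_prop)
    (integrable_cexp_neg_sq_add_div_two z).integrableOn (by fun_prop)
    (ae_of_all _ fun t x hx => norm_neg_mul_cexp_neg_sq_add_le (hball hx) t)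
    ((integrable_abs_add_const_mul_exp_neg_mul_sq (by norm_num) _).const_mul _).integrableOn
    (ae_of_all _ fun t x _ => by
      simpa only [add_comm] using hasDerivAt_cexp_neg_sq_add_div_two (t : ℂ) x)
  rw [← integral_Ioi_neg_mul_cexp_neg_sq_add_div_two]
  exact h.2

theorem integral_segment_cexp_neg_sq_div_two (p q : ℂ) :
    ∫ t in (0 : ℝ)..1, (q - p) * cexp (-((1 - (t : ℂ)) * p + t * q) ^ 2 / 2)
      = gaussTail (-q) - gaussTail (-p) := by
  have hderiv (t : ℝ) : HasDerivAt (fun t : ℝ => gaussTail (-((1 - (t : ℂ)) * p + t * q)))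
      ((q - p) * cexp (-((1 - (t : ℂ)) * p + t * q) ^ 2 / 2)) t := by
    have hpath : HasDerivAt (fun w : ℂ => -((1 - w) * p + w * q)) (p - q) t := by
      refine ((((hasDerivAt_id (t : ℂ)).const_sub 1).mul_const p).add
        ((hasDerivAt_id (t : ℂ)).mul_const q)).neg.congr_deriv ?_
      ring
    refine ((hasDerivAt_gaussTail _).comp (t : ℂ) hpath).comp_ofReal.congr_deriv ?_
    rw [neg_sq]
    ring
  rw [intervalIntegral.integral_eq_sub_of_hasDerivAt (fun t _ => hderiv t)
    (by apply Continuous.intervalIntegrable; fun_prop)]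
  simp

theorem setIntegral_Iic_neg_cexp_neg_sq_div_two (a : ℝ) :
    ∫ x in Iic (-a), cexp (-(x : ℂ) ^ 2 / 2) = gaussTail a := by
  have hpre : (· + a) ⁻¹' Ioi a = Ioi (0 : ℝ) := by
    ext x
    simp
  rw [← integral_comp_neg_Ioi, gaussTail, ← hpre,
    ← (measurePreserving_add_right volume a).setIntegral_preimage_emb
      (measurableEmbedding_addRight a) (fun x : ℝ => cexp (-((-x : ℝ) : ℂ) ^ 2 / 2))]
  simp only [ofReal_neg, ofReal_add, neg_sq]

lemma integral_Ioi_cexp_neg_mul {w : ℂ} (hw : 0 < w.re) :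
    ∫ t in Ioi (0 : ℝ), cexp (-w * t) = w⁻¹ := by
  rw [integral_exp_mul_complex_Ioi (by simpa using hw)]
  simp

theorem integral_cexp_vertical_sq_div_two_add (c : ℝ) (w : ℂ) :
    ∫ y : ℝ, cexp (((c : ℂ) + I * y) ^ 2 / 2 + w * ((c : ℂ) + I * y))
      = (Real.sqrt (2 * Real.pi) : ℂ) * cexp (-w ^ 2 / 2) := by
  have hquad (y : ℝ) : ((c : ℂ) + I * y) ^ 2 / 2 + w * ((c : ℂ) + I * y)
      = -(1 / 2) * (y : ℂ) ^ 2 + I * (c + w) * y + (c ^ 2 / 2 + w * c) := by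
    linear_combination ((y : ℂ) ^ 2 / 2) * I_sq
  simp_rw [hquad]
  rw [integral_cexp_quadratic (by norm_num)]
  congr 1
  · rw [show (Real.pi : ℂ) / -(-(1 / 2)) = ((2 * Real.pi : ℝ) : ℂ) by push_cast; ring,
      Real.sqrt_eq_rpow, ofReal_cpow (by positivity)]
    norm_num
  · congr 1
    linear_combination ((c + w) ^ 2 / 2) * I_sq

lemma integrable_vertical_laplace_kernel {s : ℂ} {c : ℝ} (hc : c < s.re) :
    Integrable (Function.uncurry fun y t : ℝ =>
      cexp (((c : ℂ) + I * y) ^ 2 / 2) * cexp (-(s - ((c : ℂ) + I * y)) * t))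
      (volume.prod (volume.restrict (Ioi 0))) := by
  have hbound : Integrable (fun p : ℝ × ℝ =>
      (Real.exp (c ^ 2 / 2) * Real.exp (-(1 / 2) * p.1 ^ 2)) * Real.exp (-(s.re - c) * p.2))
      (volume.prod (volume.restrict (Ioi 0))) :=
    ((integrable_exp_neg_mul_sq (by norm_num)).const_mul _).mul_prod
      (exp_neg_integrableOn_Ioi 0 (by linarith))
  refine hbound.mono' (by fun_prop) (ae_of_all _ fun p => le_of_eq ?_)
  simp only [Function.uncurry, norm_mul, norm_exp, ← Real.exp_add]
  congr 1
  simp only [sq, div_ofNat_re, mul_re, add_re, ofReal_re, I_re, zero_mul, I_im, ofReal_im,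
    mul_zero, sub_self, add_zero, add_im, mul_im, one_mul, zero_add, neg_sub, sub_re, sub_im,
    sub_zero, one_div, neg_mul]
  ring

lemma integral_vertical_cexp_sq_div_two_mul_laplace (s : ℂ) (c t : ℝ) :
    ∫ y : ℝ, cexp (((c : ℂ) + I * y) ^ 2 / 2) * cexp (-(s - ((c : ℂ) + I * y)) * t)
      = (Real.sqrt (2 * Real.pi) : ℂ) * cexp (s ^ 2 / 2) * cexp (-((t : ℂ) + s) ^ 2 / 2) := by
  have hsplit (y : ℝ) : cexp (((c : ℂ) + I * y) ^ 2 / 2) * cexp (-(s - ((c : ℂ) + I * y)) * t)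
      = cexp (((c : ℂ) + I * y) ^ 2 / 2 + t * ((c : ℂ) + I * y)) * cexp (-s * t) := by
    rw [← exp_add, ← exp_add]
    ring_nf
  simp_rw [hsplit]
  rw [integral_mul_const, integral_cexp_vertical_sq_div_two_add, mul_assoc, mul_assoc,
    ← exp_add, ← exp_add]
  ring_nf

theorem integral_vertical_cexp_sq_div_two_div_sub {s : ℂ} {c : ℝ} (hc : c < s.re) :
    ∫ y : ℝ, cexp (((c : ℂ) + I * y) ^ 2 / 2) / (s - ((c : ℂ) + I * y))
      = (Real.sqrt (2 * Real.pi) : ℂ) * cexp (s ^ 2 / 2) * gaussTail s := by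
  have hlaplace (y : ℝ) : cexp (((c : ℂ) + I * y) ^ 2 / 2) / (s - ((c : ℂ) + I * y))
      = ∫ t in Ioi (0 : ℝ),
          cexp (((c : ℂ) + I * y) ^ 2 / 2) * cexp (-(s - ((c : ℂ) + I * y)) * t) := by
    rw [integral_const_mul, integral_Ioi_cexp_neg_mul (by simpa using hc), div_eq_mul_inv]
  simp_rw [hlaplace]
  rw [integral_integral_swap (integrable_vertical_laplace_kernel hc)]
  simp_rw [integral_vertical_cexp_sq_div_two_mul_laplace]
  rw [integral_const_mul, gaussTail]

theorem gaussian_contour_identity_general (s : ℂ) (c : ℝ)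
    (hc : c < s.re) :
    (Real.sqrt (2 * Real.pi) : ℂ)⁻¹ * Complex.exp (s ^ 2 / 2) *
      ((∫ x in Set.Iic (-s.re), Complex.exp (-(x : ℂ) ^ 2 / 2)) +
        ∫ t in (0 : ℝ)..1, (-s - (-(s.re : ℂ))) *
          Complex.exp (-((1 - (t : ℂ)) * (-(s.re : ℂ)) + (t : ℂ) * (-s)) ^ 2 / 2))
    = (2 * Real.pi * Complex.I)⁻¹ *
        (Complex.I * ∫ y : ℝ, Complex.exp (((c : ℂ) + Complex.I * y) ^ 2 / 2) /
          (s - ((c : ℂ) + Complex.I * y))) := by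
  rw [setIntegral_Iic_neg_cexp_neg_sq_div_two, integral_segment_cexp_neg_sq_div_two, neg_neg,
    neg_neg, add_sub_cancel, integral_vertical_cexp_sq_div_two_div_sub hc]
  have hsqrt : (Real.sqrt (2 * Real.pi) : ℂ) ^ 2 = 2 * Real.pi := by
    rw [← ofReal_pow, Real.sq_sqrt (by positivity)]
    push_cast
    ring
  have hsqrt_ne : (Real.sqrt (2 * Real.pi) : ℂ) ≠ 0 := by
    simp [Real.pi_pos.le, Real.pi_ne_zero]
  field_simp
  linear_combination (-gaussTail s) * hsqrt

/-- Faddeeva-type identity: for `Re(s) > 0` and `0 < c < Re(s)`,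
`(1/√(2π)) e^{s²/2} ∫_{-∞}^{-s} e^{-x²/2} dx = (1/(2πi)) ∫_{Re(η)=c} e^{η²/2}/(s-η) dη`,
where the left path is `(-∞, -Re s] ∪ [-Re s, -s]` and the line is oriented upward. -/
theorem gaussian_contour_identity (s : ℂ) (hs : 0 < s.re) (c : ℝ)
    (hc0 : 0 < c) (hc : c < s.re) :
    (Real.sqrt (2 * Real.pi) : ℂ)⁻¹ * Complex.exp (s ^ 2 / 2) *
      ((∫ x in Set.Iic (-s.re), Complex.exp (-(x : ℂ) ^ 2 / 2)) +
        ∫ t in (0 : ℝ)..1, (-s - (-(s.re : ℂ))) *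
          Complex.exp (-((1 - (t : ℂ)) * (-(s.re : ℂ)) + (t : ℂ) * (-s)) ^ 2 / 2))
    = (2 * Real.pi * Complex.I)⁻¹ *
        (Complex.I * ∫ y : ℝ, Complex.exp (((c : ℂ) + Complex.I * y) ^ 2 / 2) /
          (s - ((c : ℂ) + Complex.I * y))) :=
  gaussian_contour_identity_general s c hc
end

section
/- For all positive integers $k, l$: $(k+l) \cdot \frac{1}{(2\pi i)^2}\iint \eta\,\zeta\, \log(\zeta - \eta)\, e^{(k\eta^2 + l\zeta^2)/2}\, d\eta\, d\zeta = \frac{1}{(2\pi i)^2}\iint e^{(k\eta^2 + l\zeta^2)/2}\, d\eta\, d\zeta = \frac{1}{2\pi\sqrt{kl}}$, where $\eta$ ranges over a vertical line $\Re(\eta) = \mathfrak{a}$ and $\zeta$ over a vertical line $\Re(\zeta) = \mathfrak{b}$ with $\mathfrak{a} < \mathfrak{b}$ (both oriented upward), and $\log$ is the principal branch, well-defined since $\Re(\zeta - \eta) > 0$. -/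
/-!
Write `η = a + iy`, `ζ = b + iy'` and `w = e^{(kη² + lζ²)/2}`. Integrating by parts along
the line of `ζ`, where `∂_ζ (log (ζ - η) w) = ((ζ - η)⁻¹ + l ζ log (ζ - η)) w`, gives
`l ∬ ηζ log (ζ - η) w = -∬ η (ζ - η)⁻¹ w`; integrating by parts along the line of `η` gives
`k ∬ ηζ log (ζ - η) w = ∬ ζ (ζ - η)⁻¹ w`. Adding the two, `(ζ - η)(ζ - η)⁻¹ = 1` leaves
`∬ w`, which factors into two Gaussian line integrals `√(2π/k) √(2π/l)`. All integrands are
polynomially bounded times `|w|`, hence absolutely integrable, which justifies Fubini and the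
vanishing of the boundary terms.
-/

open MeasureTheory Filter Complex

namespace DoubleContour

noncomputable section

def vline (c y : ℝ) : ℂ := c + I * y

def gaussLine (p c y : ℝ) : ℂ := cexp (p * vline c y ^ 2 / 2)

def gap (a b : ℝ) (z : ℝ × ℝ) : ℂ := vline b z.2 - vline a z.1

def weight (k l a b : ℝ) (z : ℝ × ℝ) : ℂ := gaussLine k a z.1 * gaussLine l b z.2

def PolyGrowth (g : ℝ × ℝ → ℂ) : Prop :=
  AEStronglyMeasurable g ∧
    ∃ C : ℝ, ∃ n : ℕ, ∀ z : ℝ × ℝ, ‖g z‖ ≤ C * ((1 + |z.1|) * (1 + |z.2|)) ^ n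

lemma integrable_one_add_abs_pow_mul_exp_neg_mul_sq {p : ℝ} (hp : 0 < p) (n : ℕ) :
    Integrable fun t : ℝ => (1 + |t|) ^ n * Real.exp (-p * t ^ 2) := by
  have hpow : Integrable fun t : ℝ => |t| ^ n * Real.exp (-p * t ^ 2) := by
    refine (integrable_rpow_mul_exp_neg_mul_sq hp (s := n)
      (neg_one_lt_zero.trans_le n.cast_nonneg)).norm.congr (Eventually.of_forall fun t => ?_)
    simp
  refine (((integrable_exp_neg_mul_sq hp).add hpow).const_mul (2 ^ (n - 1))).mono'
    (by fun_prop) (Eventually.of_forall fun t => ?_)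
  simp only [Pi.add_apply]
  rw [Real.norm_of_nonneg (by positivity), ← one_add_mul, ← mul_assoc]
  gcongr
  simpa using add_pow_le zero_le_one (abs_nonneg t) n

lemma norm_gaussLine (p c y : ℝ) :
    ‖gaussLine p c y‖ = Real.exp (p * c ^ 2 / 2) * Real.exp (-(p / 2) * y ^ 2) := by
  rw [gaussLine, Complex.norm_exp, ← Real.exp_add]
  congr 1
  simp only [vline, sq, div_ofNat_re, mul_re, ofReal_re, add_re, I_re, zero_mul, I_im, ofReal_im,
    mul_zero, sub_self, add_zero, add_im, mul_im, one_mul, zero_add, sub_zero, neg_mul]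
  ring

lemma hasDerivAt_vline (c y : ℝ) : HasDerivAt (vline c) I y := by
  have h := ((hasDerivAt_id (y : ℂ)).comp_ofReal.const_mul I).const_add (c : ℂ)
  simp only [id, mul_one] at h
  exact h

lemma hasDerivAt_gaussLine (p c y : ℝ) :
    HasDerivAt (gaussLine p c) (p * vline c y * I * gaussLine p c y) y := by
  have h := (((hasDerivAt_vline c y).pow 2).const_mul (p : ℂ)).div_const 2 |>.cexp
  refine h.congr_deriv ?_
  simp only [gaussLine, Pi.pow_apply]
  ring

lemma PolyGrowth.mul {f g : ℝ × ℝ → ℂ} (hf : PolyGrowth f) (hg : PolyGrowth g) :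
    PolyGrowth (f * g) := by
  obtain ⟨hf, C, m, hC⟩ := hf
  obtain ⟨hg, D, n, hD⟩ := hg
  refine ⟨hf.mul hg, C * D, m + n, fun z => ?_⟩
  rw [Pi.mul_apply, norm_mul, pow_add]
  calc ‖f z‖ * ‖g z‖
      ≤ (C * ((1 + |z.1|) * (1 + |z.2|)) ^ m) * (D * ((1 + |z.1|) * (1 + |z.2|)) ^ n) :=
        mul_le_mul (hC z) (hD z) (norm_nonneg _) ((norm_nonneg _).trans (hC z))
    _ = _ := by ring

lemma PolyGrowth.integrable_mul_weight {g : ℝ × ℝ → ℂ} (hg : PolyGrowth g)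
    {k l : ℝ} (hk : 0 < k) (hl : 0 < l) (a b : ℝ) :
    Integrable fun z => g z * weight k l a b z := by
  obtain ⟨hm, C, n, hC⟩ := hg
  have hy := (integrable_one_add_abs_pow_mul_exp_neg_mul_sq (half_pos hk) n).const_mul
    (Real.exp (k * a ^ 2 / 2))
  have hy' := (integrable_one_add_abs_pow_mul_exp_neg_mul_sq (half_pos hl) n).const_mul
    (Real.exp (l * b ^ 2 / 2))
  have hw : AEStronglyMeasurable (weight k l a b) := by unfold weight gaussLine vline; fun_prop
  refine ((hy.mul_prod hy').const_mul C).mono' (hm.mul hw) (Eventually.of_forall fun z => ?_)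
  rw [norm_mul, weight, norm_mul, norm_gaussLine, norm_gaussLine]
  calc ‖g z‖ * _
      ≤ C * ((1 + |z.1|) * (1 + |z.2|)) ^ n * (Real.exp (k * a ^ 2 / 2) *
          Real.exp (-(k / 2) * z.1 ^ 2) * (Real.exp (l * b ^ 2 / 2) *
          Real.exp (-(l / 2) * z.2 ^ 2))) := by
        gcongr
        exact hC z
    _ = _ := by rw [mul_pow]; ring

lemma abs_log_le_abs_log_add {r s : ℝ} (hr : 0 < r) (hrs : r ≤ s) :
    |Real.log s| ≤ |Real.log r| + s := by
  rcases le_total 1 s with hs | hs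
  · rw [abs_of_nonneg (Real.log_nonneg hs)]
    linarith [Real.log_le_sub_one_of_pos (hr.trans_le hrs), abs_nonneg (Real.log r)]
  · rw [abs_of_nonpos (Real.log_nonpos (hr.le.trans hrs) hs),
      abs_of_nonpos (Real.log_nonpos hr.le (hrs.trans hs))]
    linarith [Real.log_le_log hr hrs]

lemma norm_log_le_of_le_re {r : ℝ} (hr : 0 < r) {w : ℂ} (hw : r ≤ w.re) :
    ‖log w‖ ≤ Real.pi + |Real.log r| + ‖w‖ := by
  calc ‖log w‖ ≤ |(log w).re| + |(log w).im| := norm_le_abs_re_add_abs_im _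
    _ ≤ (|Real.log r| + ‖w‖) + Real.pi := by
        rw [log_re, log_im]
        gcongr
        · exact abs_log_le_abs_log_add hr (hw.trans (re_le_norm w))
        · exact abs_arg_le_pi w
    _ = _ := by ring

lemma norm_vline_le (c y : ℝ) : ‖vline c y‖ ≤ |c| + |y| := by
  refine (norm_add_le _ _).trans ?_
  simp

lemma measurable_gap (a b : ℝ) : Measurable (gap a b) := by
  unfold gap vline; fun_prop

lemma re_gap (a b : ℝ) (z : ℝ × ℝ) : (gap a b z).re = b - a := by
  simp [gap, vline]

lemma polyGrowth_vline_fst (a : ℝ) : PolyGrowth fun z => vline a z.1 := by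
  refine ⟨by unfold vline; fun_prop, 1 + |a|, 1, fun z => (norm_vline_le a z.1).trans ?_⟩
  have ha := abs_nonneg a; have hy := abs_nonneg z.1; have hy' := abs_nonneg z.2
  nlinarith [mul_nonneg ha hy, mul_nonneg ha hy', mul_nonneg hy hy',
    mul_nonneg (mul_nonneg ha hy) hy']

lemma polyGrowth_vline_snd (b : ℝ) : PolyGrowth fun z => vline b z.2 := by
  refine ⟨by unfold vline; fun_prop, 1 + |b|, 1, fun z => (norm_vline_le b z.2).trans ?_⟩
  have hb := abs_nonneg b; have hy := abs_nonneg z.1; have hy' := abs_nonneg z.2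
  nlinarith [mul_nonneg hb hy, mul_nonneg hb hy', mul_nonneg hy hy',
    mul_nonneg (mul_nonneg hb hy) hy']

lemma polyGrowth_gap_inv {a b : ℝ} (hab : a < b) : PolyGrowth fun z => (gap a b z)⁻¹ := by
  refine ⟨(measurable_gap a b).inv.aestronglyMeasurable, (b - a)⁻¹, 0, fun z => ?_⟩
  rw [pow_zero, mul_one, norm_inv]
  exact inv_anti₀ (sub_pos.2 hab) ((re_gap a b z).symm.trans_le (re_le_norm _))

lemma polyGrowth_log_gap {a b : ℝ} (hab : a < b) : PolyGrowth fun z => log (gap a b z) := by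
  set K := Real.pi + |Real.log (b - a)| + (b - a)
  refine ⟨(measurable_gap a b).clog.aestronglyMeasurable, K, 1, fun z => ?_⟩
  have hlog := norm_log_le_of_le_re (sub_pos.2 hab) (re_gap a b z).ge
  have hgap : ‖gap a b z‖ ≤ (b - a) + (|z.1| + |z.2|) := by
    refine (norm_le_abs_re_add_abs_im _).trans ?_
    rw [re_gap, abs_of_pos (sub_pos.2 hab)]
    gcongr
    simpa [gap, vline, add_comm] using abs_sub z.2 z.1
  have hK : 1 ≤ K := by
    linarith [Real.pi_gt_three, abs_nonneg (Real.log (b - a)), sub_pos.2 hab]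
  have hy := abs_nonneg z.1; have hy' := abs_nonneg z.2
  nlinarith [mul_nonneg hy hy', mul_nonneg (sub_nonneg.2 hK) hy,
    mul_nonneg (sub_nonneg.2 hK) hy', mul_nonneg (mul_nonneg (sub_nonneg.2 hK) hy) hy']

lemma gap_mem_slitPlane {a b : ℝ} (hab : a < b) (z : ℝ × ℝ) : gap a b z ∈ slitPlane :=
  mem_slitPlane_iff.2 <| Or.inl <| (re_gap a b z).symm ▸ sub_pos.2 hab

lemma gap_ne_zero {a b : ℝ} (hab : a < b) (z : ℝ × ℝ) : gap a b z ≠ 0 :=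
  slitPlane_ne_zero (gap_mem_slitPlane hab z)

lemma hasDerivAt_gap_fst (a b y' t : ℝ) : HasDerivAt (fun t => gap a b (t, y')) (-I) t :=
  (hasDerivAt_vline a t).const_sub (vline b y')

lemma hasDerivAt_gap_snd (a b y t : ℝ) : HasDerivAt (fun t => gap a b (y, t)) I t :=
  (hasDerivAt_vline b t).sub_const (vline a y)

lemma integral_eq_zero_of_hasDerivAt_fst {E : Type*} [NormedAddCommGroup E] [NormedSpace ℝ E]
    {Φ Φ' : ℝ × ℝ → E} (hΦ : Integrable Φ) (hΦ' : Integrable Φ')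
    (hd : ∀ x y, HasDerivAt (fun t => Φ (t, y)) (Φ' (x, y)) x) : ∫ z, Φ' z = 0 := by
  rw [Measure.volume_eq_prod] at hΦ hΦ' ⊢
  rw [integral_prod_symm _ hΦ']
  refine integral_eq_zero_of_ae ?_
  filter_upwards [hΦ.prod_left_ae, hΦ'.prod_left_ae] with y hy hy'
  exact integral_eq_zero_of_hasDerivAt_of_integrable (fun x => hd x y) hy' hy

lemma integral_eq_zero_of_hasDerivAt_snd {E : Type*} [NormedAddCommGroup E] [NormedSpace ℝ E]
    {Φ Φ' : ℝ × ℝ → E} (hΦ : Integrable Φ) (hΦ' : Integrable Φ')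
    (hd : ∀ x y, HasDerivAt (fun t => Φ (x, t)) (Φ' (x, y)) y) : ∫ z, Φ' z = 0 := by
  rw [Measure.volume_eq_prod] at hΦ hΦ' ⊢
  rw [integral_prod _ hΦ']
  refine integral_eq_zero_of_ae ?_
  filter_upwards [hΦ.prod_right_ae, hΦ'.prod_right_ae] with x hx hx'
  exact integral_eq_zero_of_hasDerivAt_of_integrable (hd x) hx' hx

lemma integral_gaussLine {p : ℝ} (hp : 0 < p) (c : ℝ) :
    ∫ y, gaussLine p c y = (√(2 * Real.pi / p) : ℂ) := by
  have hre : 0 < ((p : ℂ) / 2).re := by simpa using hp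
  have h := GaussianFourier.integral_cexp_neg_mul_sq_add_real_mul_I hre (-c)
  have hπ : (Real.pi : ℂ) / (p / 2) = ((2 * Real.pi / p : ℝ) : ℂ) := by
    push_cast
    field_simp
  have hsqrt : ((2 * Real.pi / p : ℝ) : ℂ) ^ (1 / 2 : ℂ) = (√(2 * Real.pi / p) : ℂ) := by
    rw [Real.sqrt_eq_rpow, ofReal_cpow (by positivity)]
    norm_num
  rw [hπ, hsqrt] at h
  rw [← h]
  congr 1 with y
  simp only [gaussLine, vline]
  push_cast
  congr 1
  linear_combination ((p : ℂ) / 2 * (c ^ 2 + y ^ 2)) * I_sq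

section Integrands

variable {k l a b : ℝ}

def logIntegrand (k l a b : ℝ) (z : ℝ × ℝ) : ℂ :=
  vline a z.1 * vline b z.2 * log (gap a b z) * weight k l a b z

lemma integrable_logIntegrand (hk : 0 < k) (hl : 0 < l) (hab : a < b) :
    Integrable (logIntegrand k l a b) :=
  ((polyGrowth_vline_fst a).mul (polyGrowth_vline_snd b) |>.mul (polyGrowth_log_gap hab)
    |>.integrable_mul_weight hk hl a b)

lemma hasDerivAt_mul_log_gap_mul_weight_fst (hab : a < b) (y' t : ℝ) :
    HasDerivAt (fun t => vline b y' * log (gap a b (t, y')) * weight k l a b (t, y'))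
      (I * (k * logIntegrand k l a b (t, y')
        - vline b y' * (gap a b (t, y'))⁻¹ * weight k l a b (t, y'))) t := by
  have hlog := (hasDerivAt_gap_fst a b y' t).clog_real (gap_mem_slitPlane hab (t, y'))
  have hw := (hasDerivAt_gaussLine k a t).mul_const (gaussLine l b y')
  refine (((hlog.mul hw).const_mul (vline b y')).congr_deriv ?_).congr_of_eventuallyEq
    (Eventually.of_forall fun s => ?_)
  · simp only [weight, logIntegrand, div_eq_mul_inv]
    ring
  · simp only [weight, Pi.mul_apply]
    ring

lemma hasDerivAt_mul_log_gap_mul_weight_snd (hab : a < b) (y t : ℝ) :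
    HasDerivAt (fun t => vline a y * log (gap a b (y, t)) * weight k l a b (y, t))
      (I * (vline a y * (gap a b (y, t))⁻¹ * weight k l a b (y, t)
        + l * logIntegrand k l a b (y, t))) t := by
  have hlog := (hasDerivAt_gap_snd a b y t).clog_real (gap_mem_slitPlane hab (y, t))
  have hw := (hasDerivAt_gaussLine l b t).const_mul (gaussLine k a y)
  refine (((hlog.mul hw).const_mul (vline a y)).congr_deriv ?_).congr_of_eventuallyEq
    (Eventually.of_forall fun s => ?_)
  · simp only [weight, logIntegrand, div_eq_mul_inv]
    ring
  · simp only [weight, Pi.mul_apply]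
    ring

lemma integrable_weight (hk : 0 < k) (hl : 0 < l) (a b : ℝ) : Integrable (weight k l a b) := by
  have hone : PolyGrowth fun _ => 1 := ⟨aestronglyMeasurable_const, 1, 0, fun z => by simp⟩
  simpa using hone.integrable_mul_weight hk hl a b

lemma mul_integral_logIntegrand_fst (hk : 0 < k) (hl : 0 < l) (hab : a < b) :
    k * ∫ z, logIntegrand k l a b z = ∫ z, vline b z.2 * (gap a b z)⁻¹ * weight k l a b z := by
  have hF := integrable_logIntegrand hk hl hab
  have hζ : Integrable fun z => vline b z.2 * (gap a b z)⁻¹ * weight k l a b z :=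
    ((polyGrowth_vline_snd b).mul (polyGrowth_gap_inv hab)).integrable_mul_weight hk hl a b
  have hΦ : Integrable fun z => vline b z.2 * log (gap a b z) * weight k l a b z :=
    ((polyGrowth_vline_snd b).mul (polyGrowth_log_gap hab)).integrable_mul_weight hk hl a b
  have h := integral_eq_zero_of_hasDerivAt_fst hΦ (((hF.const_mul k).sub hζ).const_mul I)
    fun t y' => hasDerivAt_mul_log_gap_mul_weight_fst hab y' t
  simp only [Pi.sub_apply] at h
  rw [integral_const_mul, integral_sub (hF.const_mul _) hζ, integral_const_mul] at h
  linear_combination (mul_eq_zero.1 h).resolve_left I_ne_zero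

lemma mul_integral_logIntegrand_snd (hk : 0 < k) (hl : 0 < l) (hab : a < b) :
    l * ∫ z, logIntegrand k l a b z = -∫ z, vline a z.1 * (gap a b z)⁻¹ * weight k l a b z := by
  have hF := integrable_logIntegrand hk hl hab
  have hη : Integrable fun z => vline a z.1 * (gap a b z)⁻¹ * weight k l a b z :=
    ((polyGrowth_vline_fst a).mul (polyGrowth_gap_inv hab)).integrable_mul_weight hk hl a b
  have hΦ : Integrable fun z => vline a z.1 * log (gap a b z) * weight k l a b z :=
    ((polyGrowth_vline_fst a).mul (polyGrowth_log_gap hab)).integrable_mul_weight hk hl a b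
  have h := integral_eq_zero_of_hasDerivAt_snd hΦ ((hη.add (hF.const_mul l)).const_mul I)
    fun y t => hasDerivAt_mul_log_gap_mul_weight_snd hab y t
  simp only [Pi.add_apply] at h
  rw [integral_const_mul, integral_add hη (hF.const_mul _), integral_const_mul] at h
  linear_combination (mul_eq_zero.1 h).resolve_left I_ne_zero

theorem add_mul_integral_logIntegrand (hk : 0 < k) (hl : 0 < l) (hab : a < b) :
    (k + l) * ∫ z, logIntegrand k l a b z = ∫ z, weight k l a b z := by
  have hη : Integrable fun z => vline a z.1 * (gap a b z)⁻¹ * weight k l a b z :=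
    ((polyGrowth_vline_fst a).mul (polyGrowth_gap_inv hab)).integrable_mul_weight hk hl a b
  have hζ : Integrable fun z => vline b z.2 * (gap a b z)⁻¹ * weight k l a b z :=
    ((polyGrowth_vline_snd b).mul (polyGrowth_gap_inv hab)).integrable_mul_weight hk hl a b
  rw [add_mul, mul_integral_logIntegrand_fst hk hl hab, mul_integral_logIntegrand_snd hk hl hab,
    ← sub_eq_add_neg, ← integral_sub hζ hη]
  congr 1 with z
  rw [← sub_mul, ← sub_mul, ← gap, mul_inv_cancel₀ (gap_ne_zero hab z), one_mul]

lemma integral_weight (hk : 0 < k) (hl : 0 < l) (a b : ℝ) :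
    ∫ z, weight k l a b z = (√(2 * Real.pi / k) : ℂ) * (√(2 * Real.pi / l) : ℂ) := by
  rw [Measure.volume_eq_prod, ← integral_gaussLine hk a, ← integral_gaussLine hl b]
  exact integral_prod_mul _ _

end Integrands

lemma integral_integral_eq_integral {f : ℝ × ℝ → ℂ} (hf : Integrable f) :
    ∫ x, ∫ y, f (x, y) = ∫ z, f z :=
  (integral_prod f hf).symm

lemma inv_two_pi_I_sq_mul_sqrt_mul_sqrt {k : ℝ} (hk : 0 < k) (l : ℝ) :
    (2 * Real.pi * I)⁻¹ ^ 2 * (I * I * ((√(2 * Real.pi / k) : ℂ) * (√(2 * Real.pi / l) : ℂ)))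
      = ((2 * Real.pi * √(k * l) : ℝ) : ℂ)⁻¹ := by
  have hs : √(2 * Real.pi / k) * √(2 * Real.pi / l) = 2 * Real.pi / √(k * l) := by
    rw [← Real.sqrt_mul (by positivity), div_mul_div_comm, ← sq, Real.sqrt_div (by positivity),
      Real.sqrt_sq (by positivity)]
  rw [← ofReal_mul, hs]
  push_cast
  field_simp

end

end DoubleContour

open DoubleContour

/-- Double contour-integral identity: for vertical lines `Re(η) = a < Re(ζ) = b`,
`(k+l)/(2πi)² ∬ ηζ log(ζ-η) e^{(kη²+lζ²)/2} = (1/(2πi))² ∬ e^{(kη²+lζ²)/2} = 1/(2π√(kl))`. -/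
theorem double_contour_identity (k l : ℕ) (hk : 1 ≤ k) (hl : 1 ≤ l)
    (a b : ℝ) (hab : a < b) :
    ((k : ℂ) + l) * (((2 * Real.pi * Complex.I)⁻¹) ^ 2 *
        (Complex.I * Complex.I * ∫ y : ℝ, ∫ y' : ℝ,
          ((a : ℂ) + Complex.I * y) * ((b : ℂ) + Complex.I * y') *
          Complex.log (((b : ℂ) + Complex.I * y') - ((a : ℂ) + Complex.I * y)) *
          Complex.exp (((k : ℂ) * ((a : ℂ) + Complex.I * y) ^ 2 +
            (l : ℂ) * ((b : ℂ) + Complex.I * y') ^ 2) / 2)))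
      = ((2 * Real.pi * Complex.I)⁻¹) ^ 2 *
        (Complex.I * Complex.I * ∫ y : ℝ, ∫ y' : ℝ,
          Complex.exp (((k : ℂ) * ((a : ℂ) + Complex.I * y) ^ 2 +
            (l : ℂ) * ((b : ℂ) + Complex.I * y') ^ 2) / 2)) ∧
    ((2 * Real.pi * Complex.I)⁻¹) ^ 2 *
        (Complex.I * Complex.I * ∫ y : ℝ, ∫ y' : ℝ,
          Complex.exp (((k : ℂ) * ((a : ℂ) + Complex.I * y) ^ 2 +
            (l : ℂ) * ((b : ℂ) + Complex.I * y') ^ 2) / 2))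
      = ((2 * Real.pi * Real.sqrt ((k : ℝ) * l) : ℝ) : ℂ)⁻¹ := by
  have hk' : (0 : ℝ) < k := by exact_mod_cast hk
  have hl' : (0 : ℝ) < l := by exact_mod_cast hl
  have hw : ∀ y y' : ℝ, Complex.exp (((k : ℂ) * ((a : ℂ) + Complex.I * y) ^ 2 +
      (l : ℂ) * ((b : ℂ) + Complex.I * y') ^ 2) / 2) = weight k l a b (y, y') := by
    intro y y'
    simp only [weight, gaussLine, vline, ← Complex.exp_add]
    push_cast
    ring_nf
  have hF : ∀ y y' : ℝ, ((a : ℂ) + Complex.I * y) * ((b : ℂ) + Complex.I * y') *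
      Complex.log (((b : ℂ) + Complex.I * y') - ((a : ℂ) + Complex.I * y)) *
      weight k l a b (y, y') = logIntegrand k l a b (y, y') := fun _ _ => rfl
  simp only [hw, hF]
  rw [integral_integral_eq_integral (integrable_logIntegrand hk' hl' hab),
    integral_integral_eq_integral (integrable_weight hk' hl' a b)]
  refine ⟨?_, ?_⟩
  · rw [← add_mul_integral_logIntegrand hk' hl' hab]
    push_cast
    ring
  · rw [integral_weight hk' hl', inv_two_pi_I_sq_mul_sqrt_mul_sqrt hk' l]
end

section
/- For every complex $z$ with $|z| < 1$: $\frac{1}{2\pi i}\int_{\Re(\xi)=0} \xi^2\, \frac{z}{e^{-\xi^2/2} - z}\, d\xi = -\frac{1}{\sqrt{2\pi}}\,\mathrm{Li}_{3/2}(z)$, where the vertical line $\Re(\xi) = 0$ is oriented from $-i\infty$ to $+i\infty$ and $\mathrm{Li}_{3/2}(z) = \sum_{k \ge 1} z^k/k^{3/2}$. -/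
/-!
On the line `ξ = i y` the integrand is `-y² z / (e^{y²/2} - z)`, and `e^{y²/2} ≥ 1 > |z|`, so it
expands as the geometric series `-∑_{k ≥ 1} z^k y² e^{-k y²/2}`. The Gaussian second moment
`∫ y² e^{-k y²/2} dy = √(2π) / k^{3/2}` is at most `√(2π)`, so the series of integrals is dominated
by a geometric series and may be integrated term by term; the prefactor `(2πi)⁻¹ · i = (2π)⁻¹`
turns `-√(2π)` into `-1 / √(2π)`.
-/

open MeasureTheory Real Set

lemma integrable_sq_mul_exp_neg_mul_sq {b : ℝ} (hb : 0 < b) :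
    Integrable fun x : ℝ ↦ x ^ 2 * exp (-b * x ^ 2) := by
  simpa using integrable_rpow_mul_exp_neg_mul_sq hb (s := 2) (by norm_num)

lemma integral_sq_mul_exp_neg_mul_sq {b : ℝ} (hb : 0 < b) :
    ∫ x : ℝ, x ^ 2 * exp (-b * x ^ 2) = √π / 2 * b ^ (-(3 / 2 : ℝ)) := by
  have hΓ : Gamma (3 / 2) = √π / 2 := by
    rw [show (3 / 2 : ℝ) = 1 / 2 + 1 by norm_num, Gamma_add_one (by norm_num), Gamma_one_half_eq]
    ring
  calc ∫ x : ℝ, x ^ 2 * exp (-b * x ^ 2)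
      = ∫ x : ℝ, (fun t ↦ t ^ (2 : ℝ) * exp (-b * t ^ (2 : ℝ))) |x| := by simp
    _ = 2 * ∫ x in Ioi 0, x ^ (2 : ℝ) * exp (-b * x ^ (2 : ℝ)) :=
      integral_comp_abs (f := fun t ↦ t ^ (2 : ℝ) * exp (-b * t ^ (2 : ℝ)))
    _ = √π / 2 * b ^ (-(3 / 2 : ℝ)) := by
      rw [integral_rpow_mul_exp_neg_mul_rpow two_pos (by norm_num) hb]
      norm_num [hΓ]
      ring

lemma integral_sq_mul_exp_neg_half_mul_sq {k : ℝ} (hk : 0 < k) :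
    ∫ x : ℝ, x ^ 2 * exp (-(k / 2) * x ^ 2) = √(2 * π) / k ^ (3 / 2 : ℝ) := by
  have h2 : (2 : ℝ) ^ (3 / 2 : ℝ) = 2 * √2 := by
    rw [show (3 / 2 : ℝ) = 1 + 1 / 2 by norm_num, rpow_add two_pos, rpow_one, sqrt_eq_rpow]
  rw [integral_sq_mul_exp_neg_mul_sq (by positivity), rpow_neg (by positivity),
    div_rpow hk.le zero_le_two, h2, sqrt_mul zero_le_two]
  field_simp

lemma hasSum_div_pow_succ {K : Type*} [NormedField K] {z w : K} (h : ‖z‖ < ‖w‖) :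
    HasSum (fun n : ℕ ↦ (z / w) ^ (n + 1)) (z / (w - z)) := by
  have hw : w ≠ 0 := norm_pos_iff.mp ((norm_nonneg z).trans_lt h)
  have hwz : w - z ≠ 0 := sub_ne_zero.mpr fun e ↦ (e ▸ h).false
  have hr : ‖z / w‖ < 1 := by rwa [norm_div, div_lt_one (norm_pos_iff.mpr hw)]
  have hgeom := (hasSum_geometric_of_norm_lt_one hr).mul_left (z / w)
  rw [show z / w * (1 - z / w)⁻¹ = z / (w - z) by field_simp] at hgeom
  simpa only [← pow_succ'] using hgeom

lemma hasSum_sq_mul_div_exp_sub {z : ℂ} (hz : ‖z‖ < 1) (y : ℝ) :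
    HasSum (fun n : ℕ ↦ -z ^ (n + 1) * ((y ^ 2 * exp (-((n + 1 : ℝ) / 2) * y ^ 2) : ℝ) : ℂ))
      ((Complex.I * y) ^ 2 * (z / (Complex.exp (-(Complex.I * y) ^ 2 / 2) - z))) := by
  have hI : (Complex.I * y) ^ 2 = -(y : ℂ) ^ 2 := by rw [mul_pow, Complex.I_sq]; ring
  have hexp : Complex.exp (-(Complex.I * y) ^ 2 / 2) = (exp (y ^ 2 / 2) : ℂ) := by
    rw [hI, Complex.ofReal_exp]; push_cast; ring_nf
  have hlt : ‖z‖ < ‖(exp (y ^ 2 / 2) : ℂ)‖ := by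
    rw [Complex.norm_real, norm_of_nonneg (exp_pos _).le]
    exact hz.trans_le (one_le_exp (by positivity))
  rw [hexp, hI]
  refine ((hasSum_div_pow_succ hlt).mul_left (-(y : ℂ) ^ 2)).congr_fun fun n ↦ ?_
  have : exp (-((n + 1 : ℝ) / 2) * y ^ 2) = (exp (y ^ 2 / 2) ^ (n + 1))⁻¹ := by
    rw [← exp_nat_mul, ← exp_neg]; push_cast; ring_nf
  rw [this]; push_cast; ring

lemma hasSum_integral_sq_mul_div_exp_sub {z : ℂ} (hz : ‖z‖ < 1) :
    HasSum (fun n : ℕ ↦ -z ^ (n + 1) * ((√(2 * π) / (n + 1 : ℝ) ^ (3 / 2 : ℝ) : ℝ) : ℂ))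
      (∫ y : ℝ, (Complex.I * y) ^ 2 * (z / (Complex.exp (-(Complex.I * y) ^ 2 / 2) - z))) := by
  set g : ℕ → ℝ → ℝ := fun n y ↦ y ^ 2 * exp (-((n + 1 : ℝ) / 2) * y ^ 2)
  have hg_int (n : ℕ) : Integrable (g n) := integrable_sq_mul_exp_neg_mul_sq (by positivity)
  have hg (n : ℕ) : ∫ y, g n y = √(2 * π) / (n + 1 : ℝ) ^ (3 / 2 : ℝ) :=
    integral_sq_mul_exp_neg_half_mul_sq (by positivity)
  have hnorm (n : ℕ) : ∫ y, ‖-z ^ (n + 1) * (g n y : ℂ)‖ = ‖z‖ ^ (n + 1) * ∫ y, g n y := by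
    rw [← integral_const_mul]
    congr 1 with y
    rw [norm_mul, norm_neg, norm_pow, Complex.norm_real, norm_of_nonneg (by positivity)]
  have hsum : Summable fun n : ℕ ↦ ‖z‖ ^ (n + 1) * ∫ y, g n y := by
    refine Summable.of_nonneg_of_le (fun n ↦ ?_) (fun n ↦ ?_)
      (((summable_geometric_of_lt_one (norm_nonneg z) hz).mul_left ‖z‖).mul_right √(2 * π))
    · rw [hg]; positivity
    · rw [hg, pow_succ']
      gcongr
      exact div_le_self (sqrt_nonneg _) (one_le_rpow (by simp) (by norm_num))
  have := hasSum_integral_of_summable_integral_norm (F := fun n y ↦ -z ^ (n + 1) * (g n y : ℂ))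
    (fun n ↦ (hg_int n).ofReal.const_mul _) (by simpa only [hnorm] using hsum)
  have hpt (y : ℝ) : ∑' n : ℕ, -z ^ (n + 1) * (g n y : ℂ)
      = (Complex.I * y) ^ 2 * (z / (Complex.exp (-(Complex.I * y) ^ 2 / 2) - z)) :=
    (hasSum_sq_mul_div_exp_sub hz y).tsum_eq
  simpa only [integral_const_mul, integral_complex_ofReal, hg, hpt] using this

/-- `(1/(2πi)) ∫_{Re(ξ)=0} ξ² z/(e^{-ξ²/2} - z) dξ = -(1/√(2π)) Li_{3/2}(z)` for `|z| < 1`. -/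
theorem contour_Li_three_halves (z : ℂ) (hz : ‖z‖ < 1) :
    (2 * Real.pi * Complex.I)⁻¹ *
      (Complex.I * ∫ y : ℝ, (Complex.I * y) ^ 2 *
        (z / (Complex.exp (-(Complex.I * y) ^ 2 / 2) - z)))
    = -(Real.sqrt (2 * Real.pi) : ℂ)⁻¹ *
        ∑' n : ℕ, z ^ (n + 1) / ((((n : ℝ) + 1) ^ ((3 : ℝ) / 2) : ℝ) : ℂ) := by
  have hterm (n : ℕ) : -z ^ (n + 1) * ((√(2 * π) / (n + 1 : ℝ) ^ (3 / 2 : ℝ) : ℝ) : ℂ)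
      = -(√(2 * π) : ℂ) * (z ^ (n + 1) / (((n + 1 : ℝ) ^ (3 / 2 : ℝ) : ℝ) : ℂ)) := by
    push_cast; ring
  have hsq : ((√(2 * π) : ℝ) : ℂ) ^ 2 = 2 * π := by
    rw [← Complex.ofReal_pow, sq_sqrt (by positivity)]; push_cast; ring
  have hs0 : ((√(2 * π) : ℝ) : ℂ) ≠ 0 := by exact_mod_cast (sqrt_pos.mpr (by positivity)).ne'
  rw [← (hasSum_integral_sq_mul_div_exp_sub hz).tsum_eq, tsum_congr hterm, tsum_mul_left,
    ← hsq]
  field_simp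
end

section
/- Define $\mathfrak{h}_{\mathrm{right}}(0, z) = -\frac{1}{\sqrt{2\pi}}\int_{-\infty}^{0} \mathrm{Li}_{1/2}\big(z\, e^{-y^2/2}\big)\, dy$ for $|z| < 1$. Then $\mathfrak{h}_{\mathrm{right}}(0, z) = \frac{1}{2}\log(1 - z)$, where $\log$ is the principal branch. -/
/-!
Expanding `Li_{1/2}`, the `k`-th term is `z ^ k / √k` times the Gaussian `exp (-(k / 2) y ^ 2)`,
whose integral over the half-line is `√(2π) / (2√k)`. The two factors `√k` combine to `k`, so
integrating termwise leaves `√(2π) / 2` times the series `∑ z ^ k / k = -log (1 - z)`. For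
`‖z‖ < 1` the same computation with `‖z‖` in place of `z` gives absolute summability, which
justifies exchanging sum and integral.
-/

open MeasureTheory Set Real

theorem integral_Iic_zero_exp_neg_mul_sq (b : ℝ) :
    ∫ y in Iic 0, exp (-b * y ^ 2) = √(π / b) / 2 := by
  have h := integral_comp_neg_Iic 0 fun y => exp (-b * y ^ 2)
  simp only [neg_zero, neg_sq] at h
  rw [h, integral_gaussian_Ioi]

theorem integral_Iic_zero_exp_neg_succ_div_two_mul_sq (n : ℕ) :
    ∫ y in Iic 0, exp (-(((n : ℝ) + 1) / 2) * y ^ 2) = √(2 * π) / 2 / √((n : ℝ) + 1) := by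
  rw [integral_Iic_zero_exp_neg_mul_sq, div_div_eq_mul_div, mul_comm π,
    sqrt_div' _ (by positivity)]
  ring

theorem integral_tsum_mul_ofReal {α : Type*} [MeasurableSpace α] {μ : Measure α}
    {a : ℕ → ℂ} {g : ℕ → α → ℝ} (hg : ∀ n, Integrable (g n) μ) (hg_nonneg : ∀ n x, 0 ≤ g n x)
    (hsum : Summable fun n => ‖a n‖ * ∫ x, g n x ∂μ) :
    ∫ x, ∑' n, a n * g n x ∂μ = ∑' n, a n * ∫ x, g n x ∂μ := by
  have hnorm (n : ℕ) : ∫ x, ‖a n * g n x‖ ∂μ = ‖a n‖ * ∫ x, g n x ∂μ := by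
    simp_rw [norm_mul, Complex.norm_real, norm_of_nonneg (hg_nonneg n _)]
    exact integral_const_mul _ _
  rw [← integral_tsum_of_summable_integral_norm (F := fun n x => a n * (g n x : ℂ))
    (fun n => (hg n).ofReal.const_mul (a n)) (by simpa only [hnorm] using hsum)]
  congr 1 with n
  rw [integral_const_mul, integral_complex_ofReal]

theorem mul_exp_neg_sq_div_two_pow_div_sqrt (z : ℂ) (n : ℕ) (y : ℝ) :
    (z * (exp (-y ^ 2 / 2) : ℂ)) ^ (n + 1) / ((((n : ℝ) + 1) ^ ((1 : ℝ) / 2) : ℝ) : ℂ) =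
      z ^ (n + 1) / (√((n : ℝ) + 1) : ℂ) * (exp (-(((n : ℝ) + 1) / 2) * y ^ 2) : ℝ) := by
  rw [← sqrt_eq_rpow, mul_pow, ← Complex.ofReal_pow, ← exp_nat_mul]
  push_cast
  ring_nf

theorem div_sqrt_mul_div_sqrt (w : ℂ) {x : ℝ} (hx : 0 < x) (c : ℝ) :
    w / (√x : ℂ) * ((c / √x : ℝ) : ℂ) = c * (w / x) := by
  have hs : (√x : ℂ) ≠ 0 := by exact_mod_cast (sqrt_pos.2 hx).ne'
  have hsq : (√x : ℂ) * √x = x := by exact_mod_cast mul_self_sqrt hx.le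
  rw [← hsq]
  push_cast
  field_simp

theorem summable_norm_pow_succ_div_sqrt_mul_integral {z : ℂ} (hz : ‖z‖ < 1) :
    Summable fun n : ℕ => ‖z ^ (n + 1) / (√((n : ℝ) + 1) : ℂ)‖ *
      ∫ y in Iic 0, exp (-(((n : ℝ) + 1) / 2) * y ^ 2) := by
  have hlog := (hasSum_pow_div_log_of_abs_lt_one (x := ‖z‖) (by rwa [abs_norm])).mul_left
    (√(2 * π) / 2)
  refine hlog.summable.congr fun n => ?_
  rw [integral_Iic_zero_exp_neg_succ_div_two_mul_sq, norm_div, norm_pow, Complex.norm_real,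
    norm_of_nonneg (sqrt_nonneg _)]
  have hsq := sq_sqrt (show (0 : ℝ) ≤ n + 1 by positivity)
  field_simp
  rw [hsq]

/-- `𝔥_right(0,z) = -(1/√(2π)) ∫_{-∞}^0 Li_{1/2}(z e^{-y²/2}) dy = (1/2) log(1-z)`. -/
theorem h_right_at_zero (z : ℂ) (hz : ‖z‖ < 1) :
    -(Real.sqrt (2 * Real.pi) : ℂ)⁻¹ *
      ∫ y in Set.Iic (0 : ℝ),
        ∑' n : ℕ, (z * (Real.exp (-y ^ 2 / 2) : ℂ)) ^ (n + 1) /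
          ((((n : ℝ) + 1) ^ ((1 : ℝ) / 2) : ℝ) : ℂ)
    = (1 / 2) * Complex.log (1 - z) := by
  have hcoeff (w : ℂ) (n : ℕ) : w / (√((n : ℝ) + 1) : ℂ) *
      ((∫ y in Iic 0, exp (-(((n : ℝ) + 1) / 2) * y ^ 2) : ℝ) : ℂ) =
        (√(2 * π) / 2 : ℝ) * (w / ((n : ℝ) + 1 : ℝ)) := by
    rw [integral_Iic_zero_exp_neg_succ_div_two_mul_sq, div_sqrt_mul_div_sqrt _ (by positivity)]
  simp_rw [mul_exp_neg_sq_div_two_pow_div_sqrt]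
  rw [integral_tsum_mul_ofReal (fun n => (integrable_exp_neg_mul_sq (by positivity)).restrict)
    (fun n y => (exp_pos _).le) (summable_norm_pow_succ_div_sqrt_mul_integral hz)]
  simp_rw [hcoeff]
  push_cast
  rw [tsum_mul_left, (Complex.hasSum_taylorSeries_neg_log' hz).tsum_eq]
  have : (√(2 * π) : ℂ) ≠ 0 := by exact_mod_cast (sqrt_pos.2 (by positivity)).ne'
  field_simp
end

section
/- For every complex number $u$ with $\arg(u) \in (3\pi/4, 5\pi/4)$: $\frac{1}{\sqrt{2\pi}}\int_{-\infty}^{u} e^{-\omega^2/2}\, d\omega = \frac{1}{2\pi i}\int_{\Re(\omega) = 0} \frac{e^{(-u^2 + \omega^2)/2}}{\omega - u}\, d\omega$, where the left integral is from $-\infty$ (along the real axis) to $u$ within the sector $\arg(\omega) \in (3\pi/4, 5\pi/4)$, and the right integral is over the imaginary axis oriented from $-i\infty$ to $+i\infty$. -/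
/-!
Both sides reduce to `√(2π)⁻¹ ∫₀^∞ exp(-(u - s)²/2) ds`. On the left, Cauchy's theorem on
the half-strip `Re z ≤ Re u` (the Gaussian decays on vertical segments far to the left) moves
the path `(-∞, Re u] ∪ [Re u, u]` onto the horizontal ray ending at `u`. On the right,
`Re u < 0` gives `1 / (iy - u) = ∫₀^∞ exp(-(iy - u)s) ds`; after Fubini the `y`-integral is
the Fourier transform of the Gaussian, `√(2π) exp(-s²/2)`.
-/

open MeasureTheory Set Complex Real Filter Topology

lemma setIntegral_Iic_eq_setIntegral_Ioi_sub {E : Type*} [NormedAddCommGroup E]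
    [NormedSpace ℝ E] (f : ℝ → E) (a : ℝ) :
    ∫ x in Iic a, f x = ∫ s in Ioi 0, f (a - s) := by
  rw [← (Measure.measurePreserving_sub_left volume a).setIntegral_preimage_emb
    (Homeomorph.subLeft a).measurableEmbedding, ← integral_Ici_eq_integral_Ioi]
  congr 2
  ext s
  simp

lemma integral_segment_re_eq_I_mul_integral_vertical (f : ℂ → ℂ) (u : ℂ) :
    ∫ t in (0 : ℝ)..1, (u - u.re) * f ((1 - t) * u.re + t * u) =
      I * ∫ y in (0 : ℝ)..u.im, f (u.re + y * I) := by
  have hu : u - u.re = u.im * I := by rw [sub_eq_iff_eq_add', re_add_im]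
  have hpt (t : ℝ) : (1 - t) * (u.re : ℂ) + t * u = u.re + (u.im * t : ℝ) * I := by
    push_cast
    linear_combination (t : ℂ) * hu
  have h_scale := intervalIntegral.smul_integral_comp_mul_left
    (fun y : ℝ => f (u.re + y * I)) u.im (a := 0) (b := 1)
  simp only [mul_zero, mul_one, Complex.real_smul] at h_scale
  simp_rw [hpt, hu, ← h_scale, ← intervalIntegral.integral_const_mul]
  congr 1 with t
  ring

lemma integral_Iic_add_I_mul_integral_vertical_eq {f : ℂ → ℂ} {a b : ℝ}
    (hf : Differentiable ℂ f) (h₀ : IntegrableOn (fun x : ℝ => f x) (Iic a))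
    (h₁ : IntegrableOn (fun x : ℝ => f (x + b * I)) (Iic a))
    (hv : Tendsto (fun R : ℝ => ∫ y in (0 : ℝ)..b, f (R + y * I)) atBot (𝓝 0)) :
    (∫ x in Iic a, f x) + I * ∫ y in (0 : ℝ)..b, f (a + y * I) =
      ∫ x in Iic a, f (x + b * I) := by
  have h_rect (R : ℝ) : ∫ x in R..a, f (x + b * I) =
      (∫ x in R..a, f x) + I * (∫ y in (0 : ℝ)..b, f (a + y * I)) -
        I * ∫ y in (0 : ℝ)..b, f (R + y * I) := by
    have := integral_boundary_rect_eq_zero_of_differentiableOn f R (a + b * I)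
      hf.differentiableOn
    simp only [ofReal_re, ofReal_im, add_re, add_im, mul_re, mul_im, I_re, I_im, ofReal_zero,
      zero_mul, add_zero, mul_zero, sub_zero, mul_one, zero_add, smul_eq_mul] at this
    linear_combination -this
  refine tendsto_nhds_unique ?_ (intervalIntegral_tendsto_integral_Iic a h₁ tendsto_id)
  simp_rw [id, h_rect]
  simpa using ((intervalIntegral_tendsto_integral_Iic a h₀ tendsto_id).add_const _).sub
    (hv.const_mul I)

lemma norm_cexp_neg_add_mul_I_sq_div_two (x y : ℝ) :
    ‖cexp (-(x + y * I) ^ 2 / 2)‖ = rexp ((y ^ 2 - x ^ 2) / 2) := by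
  rw [norm_exp]
  simp [sq]

lemma integrable_cexp_neg_add_mul_I_sq_div_two (b : ℝ) :
    Integrable fun x : ℝ => cexp (-(x + b * I) ^ 2 / 2) := by
  simpa [neg_div, div_eq_inv_mul] using
    GaussianFourier.integrable_cexp_neg_mul_sq_add_real_mul_I (b := 1 / 2) (by norm_num) b

lemma tendsto_integral_vertical_cexp_neg_sq_div_two (b : ℝ) :
    Tendsto (fun R : ℝ => ∫ y in (0 : ℝ)..b, cexp (-(R + y * I) ^ 2 / 2)) atBot (𝓝 0) := by
  have h_bound (R : ℝ) : ‖∫ y in (0 : ℝ)..b, cexp (-(R + y * I) ^ 2 / 2)‖ ≤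
      rexp ((b ^ 2 - R ^ 2) / 2) * |b - 0| := by
    refine intervalIntegral.norm_integral_le_of_norm_le_const fun y hy => ?_
    have hy_sq : y ^ 2 ≤ b ^ 2 :=
      sq_le_sq.mpr (by simpa using abs_sub_left_of_mem_uIcc (uIoc_subset_uIcc hy))
    rw [norm_cexp_neg_add_mul_I_sq_div_two]
    gcongr
  have h_sq : Tendsto (fun R : ℝ => R ^ 2) atBot atTop := by
    simpa [sq] using tendsto_id.atBot_mul_atBot₀ tendsto_id
  have h_exponent : Tendsto (fun R : ℝ => (b ^ 2 - R ^ 2) / 2) atBot atBot :=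
    (tendsto_atBot_add_const_left _ _ (tendsto_neg_atTop_atBot.comp h_sq)).atBot_div_const
      two_pos
  exact squeeze_zero_norm h_bound
    (by simpa using (tendsto_exp_atBot.comp h_exponent).mul_const _)

lemma integral_Iic_cexp_neg_sq_div_two_add_I_mul_integral_vertical (a b : ℝ) :
    (∫ x in Iic a, cexp (-(x : ℂ) ^ 2 / 2)) +
        I * ∫ y in (0 : ℝ)..b, cexp (-(a + y * I) ^ 2 / 2) =
      ∫ x in Iic a, cexp (-(x + b * I) ^ 2 / 2) :=
  integral_Iic_add_I_mul_integral_vertical_eq (f := fun z => cexp (-z ^ 2 / 2)) (by fun_prop)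
    (by simpa using (integrable_cexp_neg_add_mul_I_sq_div_two 0).integrableOn)
    (integrable_cexp_neg_add_mul_I_sq_div_two b).integrableOn
    (tendsto_integral_vertical_cexp_neg_sq_div_two b)

lemma inv_eq_integral_Ioi_cexp_neg_mul {c : ℂ} (hc : 0 < c.re) :
    c⁻¹ = ∫ s in Ioi (0 : ℝ), cexp (-c * s) := by
  rw [integral_exp_mul_complex_Ioi (by simpa using hc)]
  simp

lemma fourierIntegral_gaussian_one_half (t : ℂ) :
    ∫ y : ℝ, cexp (I * t * y) * cexp (-(1 / 2) * y ^ 2) = √(2 * π) * cexp (-t ^ 2 / 2) := by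
  have h_sqrt : ((π : ℂ) / (1 / 2)) ^ (1 / 2 : ℂ) = (√(2 * π) : ℂ) := by
    rw [show (π / (1 / 2) : ℂ) = ((2 * π : ℝ) : ℂ) by push_cast; ring,
      show (1 / 2 : ℂ) = ((1 / 2 : ℝ) : ℂ) by push_cast; ring,
      ← ofReal_cpow (by positivity), ← sqrt_eq_rpow]
  rw [fourierIntegral_gaussian (by norm_num), h_sqrt]
  congr 2
  ring

lemma integral_cexp_div_I_mul_sub_eq_integral_Ioi {u : ℂ} (hu : u.re < 0) :
    ∫ y : ℝ, cexp ((-u ^ 2 + (I * y) ^ 2) / 2) / (I * y - u) =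
      √(2 * π) * ∫ s in Ioi (0 : ℝ), cexp (-(u - s) ^ 2 / 2) := by
  set K : ℝ → ℝ → ℂ := fun y s => cexp ((-u ^ 2 + (I * y) ^ 2) / 2 - (I * y - u) * s)
  have h_inner (y : ℝ) :
      cexp ((-u ^ 2 + (I * y) ^ 2) / 2) / (I * y - u) = ∫ s in Ioi (0 : ℝ), K y s := by
    have hre : 0 < (I * y - u).re := by simpa using hu
    rw [div_eq_mul_inv, inv_eq_integral_Ioi_cexp_neg_mul hre, ← integral_const_mul]
    simp_rw [K, ← Complex.exp_add, neg_mul, sub_eq_add_neg]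
  have h_outer (s : ℝ) : ∫ y : ℝ, K y s = √(2 * π) * cexp (-(u - s) ^ 2 / 2) := by
    have hK (y : ℝ) : K y s = cexp (I * (-s) * y) * cexp (-(1 / 2) * y ^ 2) *
        cexp (s ^ 2 / 2 - (u - s) ^ 2 / 2) := by
      simp only [K, ← Complex.exp_add]
      congr 1
      linear_combination (y ^ 2 / 2 : ℂ) * I_sq
    simp_rw [hK, integral_mul_const, fourierIntegral_gaussian_one_half, mul_assoc,
      ← Complex.exp_add]
    congr 2
    ring
  have h_int : Integrable (Function.uncurry K) (volume.prod (volume.restrict (Ioi 0))) := by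
    have h_exp : IntegrableOn (fun s : ℝ => rexp (u.re * s)) (Ioi 0) := by
      simpa using exp_neg_integrableOn_Ioi 0 (neg_pos.mpr hu)
    refine Integrable.mono' (((integrable_exp_neg_mul_sq (b := 1 / 2) (by norm_num)).mul_prod
      h_exp).const_mul (rexp (-(u ^ 2).re / 2))) (by fun_prop) (Eventually.of_forall ?_)
    rintro ⟨y, s⟩
    simp only [Function.uncurry, K, norm_exp, ← Real.exp_add]
    apply le_of_eq
    congr 1
    simp only [sq, sub_re, div_ofNat_re, add_re, neg_re, mul_re, neg_sub, I_re, ofReal_re,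
      zero_mul, I_im, ofReal_im, mul_zero, sub_self, mul_im, one_mul, zero_add, zero_sub, neg_mul,
      sub_im, sub_zero, sub_neg_eq_add, one_div]
    ring
  simp_rw [h_inner]
  rw [integral_integral_swap h_int, ← integral_const_mul]
  exact setIntegral_congr_fun measurableSet_Ioi fun s _ => h_outer s

/-- For `u` in the sector `arg(u) ∈ (3π/4, 5π/4)`,
`(1/√(2π)) ∫_{-∞}^{u} e^{-ω²/2} dω = (1/(2πi)) ∫_{Re(ω)=0} e^{(-u²+ω²)/2}/(ω-u) dω`,
where the left path is `(-∞, Re u] ∪ [Re u, u]`. -/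
theorem gaussian_sector_identity (u : ℂ) (hu : 3 * Real.pi / 4 < |Complex.arg u|) :
    (Real.sqrt (2 * Real.pi) : ℂ)⁻¹ *
      ((∫ x in Set.Iic u.re, Complex.exp (-(x : ℂ) ^ 2 / 2)) +
        ∫ t in (0 : ℝ)..1, (u - (u.re : ℂ)) *
          Complex.exp (-((1 - (t : ℂ)) * (u.re : ℂ) + (t : ℂ) * u) ^ 2 / 2))
    = (2 * Real.pi * Complex.I)⁻¹ *
        (Complex.I * ∫ y : ℝ, Complex.exp ((-u ^ 2 + (Complex.I * y) ^ 2) / 2) /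
          (Complex.I * y - u)) := by
  have hre : u.re < 0 := by
    by_contra! h
    linarith [abs_arg_le_pi_div_two_iff.mpr h, pi_pos]
  have h_shift (s : ℝ) : ((u.re - s : ℝ) : ℂ) + u.im * I = u - s := by
    push_cast
    linear_combination re_add_im u
  rw [integral_segment_re_eq_I_mul_integral_vertical (fun z => cexp (-z ^ 2 / 2)),
    integral_Iic_cexp_neg_sq_div_two_add_I_mul_integral_vertical,
    setIntegral_Iic_eq_setIntegral_Ioi_sub, integral_cexp_div_I_mul_sub_eq_integral_Ioi hre]
  simp_rw [h_shift]
  have h_sqrt : (√(2 * π) : ℂ) ^ 2 = 2 * π := by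
    rw [← ofReal_pow, sq_sqrt (by positivity)]
    push_cast
    ring
  have h_sqrt_ne : (√(2 * π) : ℂ) ≠ 0 :=
    ofReal_ne_zero.mpr (sqrt_pos.mpr (by positivity)).ne'
  rw [← h_sqrt]
  field_simp
end

section
/- Let $0 < \rho < 1$, $c$ a real constant with $0 < c \le 1 - \rho$, and consider the level curve $\Gamma = \{u \in \mathbb{C} : |u|^\rho |u+1|^{1-\rho} = r\}$ for a constant $r > 0$. Writing $u = x + iy$ on $\Gamma$ (with $u \neq 0, -1$), the logarithmic derivative of $|u+1|^{-c} e^{\Re u}$ with respect to $x$ along $\Gamma$ equals $\frac{(x+\rho)^2 + \rho(1 - \rho - c) + y^2}{x^2 + 2\rho x + \rho + y^2}$; in particular, for $0 < c \le 1 - \rho$ the function $|u+1|^{-c} e^{\Re u}$ is nondecreasing in $\Re u$ along $\Gamma$. -/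
/-!
Clearing denominators in the level-curve relation gives
`(ρ x |u+1|² + (1-ρ)(x+1)|u|²) dx + D y dy = 0` with `D = ρ|u+1|² + (1-ρ)|u|² = x² + 2ρx + ρ + y²`,
so `y dy` can be eliminated from the logarithmic differential of `|u+1|^{-c} e^x`.
Writing `D = (x+ρ)² + ρ(1-ρ) + y²` shows `D > 0` and, for `c ≤ 1-ρ`, that the resulting
numerator is nonnegative.
-/

lemma sq_add_sq_ne_zero_of_ne {R : Type*} [CommRing R] [LinearOrder R] [IsStrictOrderedRing R]
    {a b : R} (h : (a, b) ≠ (0, 0)) : a ^ 2 + b ^ 2 ≠ 0 := by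
  rw [sq, sq, Ne, mul_self_add_mul_self_eq_zero]
  rintro ⟨rfl, rfl⟩
  exact h rfl

lemma level_curve_coeff_pos {ρ : ℝ} (hρ0 : 0 < ρ) (hρ1 : ρ < 1) (x y : ℝ) :
    0 < x ^ 2 + 2 * ρ * x + ρ + y ^ 2 := by
  have : 0 < ρ * (1 - ρ) := mul_pos hρ0 (sub_pos.2 hρ1)
  nlinarith [sq_nonneg (x + ρ), sq_nonneg y]

lemma level_curve_numerator_nonneg {ρ c : ℝ} (hρ0 : 0 ≤ ρ) (hc : c ≤ 1 - ρ) (x y : ℝ) :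
    0 ≤ (x + ρ) ^ 2 + ρ * (1 - ρ - c) + y ^ 2 := by
  have : 0 ≤ ρ * (1 - ρ - c) := mul_nonneg hρ0 (by linarith)
  positivity

lemma log_differential_eq_of_level_curve {ρ c x y dx dy : ℝ}
    (hA : x ^ 2 + y ^ 2 ≠ 0) (hB : (x + 1) ^ 2 + y ^ 2 ≠ 0)
    (hD : x ^ 2 + 2 * ρ * x + ρ + y ^ 2 ≠ 0)
    (hrel : (ρ * x / (x ^ 2 + y ^ 2) + (1 - ρ) * (x + 1) / ((x + 1) ^ 2 + y ^ 2)) * dx +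
        (ρ * y / (x ^ 2 + y ^ 2) + (1 - ρ) * y / ((x + 1) ^ 2 + y ^ 2)) * dy = 0) :
    (1 - c * (x + 1) / ((x + 1) ^ 2 + y ^ 2)) * dx - c * y / ((x + 1) ^ 2 + y ^ 2) * dy
      = ((x + ρ) ^ 2 + ρ * (1 - ρ - c) + y ^ 2) / (x ^ 2 + 2 * ρ * x + ρ + y ^ 2) * dx := by
  have cleared : (ρ * x * ((x + 1) ^ 2 + y ^ 2) + (1 - ρ) * (x + 1) * (x ^ 2 + y ^ 2)) * dx
      + (x ^ 2 + 2 * ρ * x + ρ + y ^ 2) * (y * dy) = 0 := by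
    field_simp at hrel
    linear_combination hrel
  rw [eq_comm, div_mul_eq_mul_div, div_eq_iff hD]
  field_simp
  linear_combination c * cleared

theorem level_curve_monotonicity_general (ρ c x y dx dy : ℝ)
    (hρ0 : 0 < ρ) (hρ1 : ρ < 1) (hc : c ≤ 1 - ρ)
    (h0 : (x, y) ≠ ((0 : ℝ), (0 : ℝ))) (h1 : (x, y) ≠ ((-1 : ℝ), (0 : ℝ)))
    (hrel : (ρ * x / (x ^ 2 + y ^ 2) + (1 - ρ) * (x + 1) / ((x + 1) ^ 2 + y ^ 2)) * dx +
        (ρ * y / (x ^ 2 + y ^ 2) + (1 - ρ) * y / ((x + 1) ^ 2 + y ^ 2)) * dy = 0) :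
    (1 - c * (x + 1) / ((x + 1) ^ 2 + y ^ 2)) * dx - c * y / ((x + 1) ^ 2 + y ^ 2) * dy
      = ((x + ρ) ^ 2 + ρ * (1 - ρ - c) + y ^ 2) / (x ^ 2 + 2 * ρ * x + ρ + y ^ 2) * dx ∧
    0 ≤ ((x + ρ) ^ 2 + ρ * (1 - ρ - c) + y ^ 2) / (x ^ 2 + 2 * ρ * x + ρ + y ^ 2) := by
  have hD := level_curve_coeff_pos hρ0 hρ1 x y
  have hB : (x + 1) ^ 2 + y ^ 2 ≠ 0 :=
    sq_add_sq_ne_zero_of_ne fun h ↦ h1 (by simp_all [eq_neg_iff_add_eq_zero])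
  refine ⟨log_differential_eq_of_level_curve (sq_add_sq_ne_zero_of_ne h0) hB hD.ne' hrel, ?_⟩
  exact div_nonneg (level_curve_numerator_nonneg hρ0.le hc x y) hD.le

/-- Along the level curve `|u|^ρ |u+1|^{1-ρ} = r`, writing `u = x + iy`, the logarithmic
differential of `|u+1|^{-c} e^{Re u}` equals
`((x+ρ)² + ρ(1-ρ-c) + y²)/(x² + 2ρx + ρ + y²) dx`; for `0 < c ≤ 1-ρ` this ratio is
nonnegative, so the function is nondecreasing in `Re u` along the curve. -/
theorem level_curve_monotonicity (ρ c x y dx dy : ℝ)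
    (hρ0 : 0 < ρ) (hρ1 : ρ < 1) (hc0 : 0 < c) (hc : c ≤ 1 - ρ)
    (h0 : (x, y) ≠ ((0 : ℝ), (0 : ℝ))) (h1 : (x, y) ≠ ((-1 : ℝ), (0 : ℝ)))
    (hden : x ^ 2 + 2 * ρ * x + ρ + y ^ 2 ≠ 0)
    (hrel : (ρ * x / (x ^ 2 + y ^ 2) + (1 - ρ) * (x + 1) / ((x + 1) ^ 2 + y ^ 2)) * dx +
        (ρ * y / (x ^ 2 + y ^ 2) + (1 - ρ) * y / ((x + 1) ^ 2 + y ^ 2)) * dy = 0) :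
    (1 - c * (x + 1) / ((x + 1) ^ 2 + y ^ 2)) * dx - c * y / ((x + 1) ^ 2 + y ^ 2) * dy
      = ((x + ρ) ^ 2 + ρ * (1 - ρ - c) + y ^ 2) / (x ^ 2 + 2 * ρ * x + ρ + y ^ 2) * dx ∧
    0 ≤ ((x + ρ) ^ 2 + ρ * (1 - ρ - c) + y ^ 2) / (x ^ 2 + 2 * ρ * x + ρ + y ^ 2) :=
  level_curve_monotonicity_general ρ c x y dx dy hρ0 hρ1 hc h0 h1 hrel
end
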